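/- The characteristic polynomial of the 3×3 real matrix A_c^ZB is (X − u)³ (so u is an eigenvalue of algebraic multiplicity 3); furthermore (A_c^ZB − u·I)² = 0 while A_c^ZB − u·I ≠ 0, so the minimal polynomial of A_c^ZB is (X − u)². -/
import Mathlib


open Polynomial

/-- The Zha–Bilgen convection flux Jacobian of the 1-D Euler system. -/
noncomputable def AcZB (u E : ℝ) : Matrix (Fin 3) (Fin 3) ℝ :=
  !![0, 1, 0;
     -u^2, 2*u, 0;
     -u*E, E, u]

/-- The characteristic polynomial of `A_c^ZB` is `(X − u)³`, `(A_c^ZB − u·I)² = 0` while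
`A_c^ZB − u·I ≠ 0`, and the minimal polynomial of `A_c^ZB` is `(X − u)²`. -/
theorem charpoly_minpoly_AcZB (u E : ℝ) :
    (AcZB u E).charpoly = (X - C u)^3 ∧
    (AcZB u E - u • (1 : Matrix (Fin 3) (Fin 3) ℝ))^2 = 0 ∧
    AcZB u E - u • (1 : Matrix (Fin 3) (Fin 3) ℝ) ≠ 0 ∧
    minpoly ℝ (AcZB u E) = (X - C u)^2 := by
  have hchar : (AcZB u E).charpoly = (X - C u)^3 := by
    rw [Matrix.charpoly, Matrix.det_fin_three]
    simp [AcZB, Matrix.charmatrix_apply, Matrix.one_apply, map_ofNat]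
    ring
  have hsq : (AcZB u E - u • (1 : Matrix (Fin 3) (Fin 3) ℝ))^2 = 0 := by
    ext i j
    fin_cases i <;> fin_cases j <;>
      simp [AcZB, pow_two, Matrix.mul_apply, Fin.sum_univ_succ, Matrix.one_apply] <;> ring
  have hne : AcZB u E - u • (1 : Matrix (Fin 3) (Fin 3) ℝ) ≠ 0 := by
    intro h
    have := congrFun (congrFun h 0) 1
    simp [AcZB, Matrix.one_apply] at this
  refine ⟨hchar, hsq, hne, ?_⟩
  have haeval : (aeval (AcZB u E)) ((X - C u)^2) = 0 := by
    simpa [Algebra.algebraMap_eq_smul_one] using hsq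
  have hdvd : minpoly ℝ (AcZB u E) ∣ (X - C u)^2 :=
    minpoly.dvd ℝ _ haeval
  obtain ⟨k, hk, hassoc⟩ := (dvd_prime_pow (prime_X_sub_C u) 2).mp hdvd
  have hmonic : (minpoly ℝ (AcZB u E)).Monic :=
    minpoly.monic (Matrix.isIntegral _)
  have heq : minpoly ℝ (AcZB u E) = (X - C u)^k :=
    Polynomial.eq_of_monic_of_associated hmonic ((monic_X_sub_C u).pow k) hassoc
  interval_cases k
  · exfalso
    have := minpoly.aeval ℝ (AcZB u E)
    rw [heq] at this
    simp at this
  · exfalso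
    have := minpoly.aeval ℝ (AcZB u E)
    rw [heq] at this
    simp [Algebra.algebraMap_eq_smul_one] at this
    exact hne this
  · exact heq
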